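/- arXiv:2208.04684 — 5 statements merged into one kernel-verified Lean document; each statement's English description precedes it below -/
import Mathlib

section
/- For all real x ≤ 0, all r ≥ 0 and all θ ∈ [3π/4, 5π/4], one has |erfc(x + r·e^{iθ})| ≥ erfc(x). -/
open MeasureTheory Real

/-- Real complementary error function. -/
noncomputable def erfc (x : ℝ) : ℝ :=
  (2 / Real.sqrt π) * ∫ t in Set.Ioi x, Real.exp (-t ^ 2)

/-- Complex complementary error function, via a horizontal path from `z` to `+∞`
(path-independent since the integrand is entire and rapidly decaying). -/
noncomputable def cerfc (z : ℂ) : ℂ :=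
  (2 / Real.sqrt π : ℝ) * ∫ t in Set.Ioi (0 : ℝ), Complex.exp (-(z + (t : ℂ)) ^ 2)

/-! Write `z = x + r e^{iθ} = a + ib`. Substituting `u = a + t` in the definition,
`Re cerfc z = (2/√π) ∫_a^∞ Re e^{-(u+ib)²} du`, and `Re e^{-(u+ib)²}` has total integral
`√π`, like `e^{-t²}`. For `θ ∈ [3π/4, 5π/4]` we have `|b| ≤ d := x - a`, and then for
`u ≤ a ≤ -d`, `Re e^{-(u+ib)²} ≤ e^{b²-u²} ≤ e^{-(u+d)²}`. So the left tail of
`Re e^{-(u+ib)²}` below `a` is at most the Gaussian tail below `x`, and since the total masses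
agree, the right tails compare the other way: `erfc x ≤ Re cerfc z ≤ |cerfc z|`. -/

open Set

theorem abs_sin_le_neg_cos {θ : ℝ} (hθ : θ ∈ Icc (3 * π / 4) (5 * π / 4)) :
    |sin θ| ≤ -cos θ := by
  obtain ⟨h₁, h₂⟩ := hθ
  have hcos : cos θ ≤ 0 :=
    cos_nonpos_of_pi_div_two_le_of_le (by linarith [pi_pos]) (by linarith)
  have hcos2 : 0 ≤ cos (2 * θ) := by
    rw [← cos_sub_two_pi]
    exact cos_nonneg_of_mem_Icc ⟨by linarith, by linarith⟩
  rw [abs_le]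
  constructor <;> nlinarith [cos_two_mul θ, sin_sq_add_cos_sq θ]

open Complex

theorem setIntegral_comp_add_right {E : Type*} [NormedAddCommGroup E] [NormedSpace ℝ E]
    (g : ℝ → E) (c : ℝ) (s : Set ℝ) :
    ∫ t in (· + c) ⁻¹' s, g (t + c) = ∫ u in s, g u :=
  (measurePreserving_add_right volume c).setIntegral_preimage_emb
    (measurableEmbedding_addRight c) g s

theorem integral_Ioi_le_of_integral_Iic_le {f g : ℝ → ℝ} (hf : Integrable f)
    (hg : Integrable g) (hfg : ∫ u, f u = ∫ u, g u) {a b : ℝ}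
    (h : ∫ u in Iic a, f u ≤ ∫ u in Iic b, g u) :
    ∫ u in Ioi b, g u ≤ ∫ u in Ioi a, f u := by
  have hf' := intervalIntegral.integral_Iic_add_Ioi hf.integrableOn (b := a) hf.integrableOn
  have hg' := intervalIntegral.integral_Iic_add_Ioi hg.integrableOn (b := b) hg.integrableOn
  linarith

theorem integrable_cexp_neg_add_mul_I_sq (b : ℝ) :
    Integrable fun u : ℝ => cexp (-(u + b * I) ^ 2) := by
  simpa using GaussianFourier.integrable_cexp_neg_mul_sq_add_real_mul_I (b := 1) (by simp) b

theorem integral_cexp_neg_add_mul_I_sq (b : ℝ) :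
    ∫ u : ℝ, cexp (-(u + b * I) ^ 2) = √π := by
  have h := GaussianFourier.integral_cexp_neg_mul_sq_add_real_mul_I (b := 1) (by simp) b
  simp only [neg_one_mul, div_one] at h
  rw [h, show (1 / 2 : ℂ) = ((1 / 2 : ℝ) : ℂ) by norm_num, ← ofReal_cpow pi_pos.le,
    sqrt_eq_rpow]

theorem norm_cexp_neg_add_mul_I_sq (u b : ℝ) :
    ‖cexp (-(u + b * I) ^ 2)‖ = rexp (b ^ 2 - u ^ 2) := by
  simpa [sub_eq_add_neg, add_comm] using GaussianFourier.norm_cexp_neg_mul_sq_add_mul_I 1 b u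

theorem re_cexp_neg_add_mul_I_sq_le {u b d : ℝ} (hbd : |b| ≤ d) (hu : u ≤ -d) :
    (cexp (-(u + b * I) ^ 2)).re ≤ rexp (-(u + d) ^ 2) := by
  refine (re_le_norm _).trans ?_
  rw [norm_cexp_neg_add_mul_I_sq, exp_le_exp]
  have hb : b ^ 2 ≤ d ^ 2 := sq_le_sq' (abs_le.mp hbd).1 (abs_le.mp hbd).2
  nlinarith [(abs_nonneg b).trans hbd]

theorem cerfc_eq_integral_Ioi_re (z : ℂ) :
    cerfc z = (2 / √π : ℝ) * ∫ u in Ioi z.re, cexp (-(u + z.im * I) ^ 2) := by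
  rw [cerfc, ← setIntegral_comp_add_right _ z.re (Ioi z.re), preimage_add_const_Ioi, sub_self]
  congr 2 with t
  conv_lhs => rw [← re_add_im z]
  push_cast
  ring_nf

theorem re_cerfc (z : ℂ) :
    (cerfc z).re = 2 / √π * ∫ u in Ioi z.re, (cexp (-(u + z.im * I) ^ 2)).re := by
  rw [cerfc_eq_integral_Ioi_re, re_ofReal_mul]
  exact congrArg _ (integral_re (integrable_cexp_neg_add_mul_I_sq z.im).integrableOn).symm

theorem erfc_le_re_cerfc {x : ℝ} {z : ℂ} (hx : x ≤ 0) (hz : |z.im| ≤ x - z.re) :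
    erfc x ≤ (cerfc z).re := by
  set f : ℝ → ℝ := fun u => (cexp (-(u + z.im * I) ^ 2)).re
  have hf : Integrable f := (integrable_cexp_neg_add_mul_I_sq z.im).re
  have hgauss : Integrable fun t : ℝ => rexp (-t ^ 2) := by
    simpa using integrable_exp_neg_mul_sq (b := (1 : ℝ)) one_pos
  have hmass : ∫ u, f u = ∫ t, rexp (-t ^ 2) := by
    rw [show ∫ u, f u = (∫ u : ℝ, cexp (-(u + z.im * I) ^ 2)).re from
      integral_re (integrable_cexp_neg_add_mul_I_sq z.im), integral_cexp_neg_add_mul_I_sq,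
      ofReal_re]
    simpa using (integral_gaussian 1).symm
  have hleft : ∫ u in Iic z.re, f u ≤ ∫ t in Iic x, rexp (-t ^ 2) := calc
    ∫ u in Iic z.re, f u ≤ ∫ u in Iic z.re, rexp (-(u + (x - z.re)) ^ 2) :=
      setIntegral_mono_on hf.integrableOn (hgauss.comp_add_right _).integrableOn
        measurableSet_Iic fun u hu => re_cexp_neg_add_mul_I_sq_le hz (by simp at hu; linarith)
    _ = ∫ t in Iic x, rexp (-t ^ 2) := by
      rw [← setIntegral_comp_add_right _ (x - z.re) (Iic x), preimage_add_const_Iic,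
        sub_sub_cancel]
  rw [erfc, re_cerfc]
  gcongr
  exact integral_Ioi_le_of_integral_Iic_le hf hgauss hmass hleft

theorem abs_cerfc_ge (x r θ : ℝ) (hx : x ≤ 0) (hr : 0 ≤ r)
    (hθ : θ ∈ Set.Icc (3 * π / 4) (5 * π / 4)) :
    erfc x ≤ ‖cerfc ((x : ℂ) + (r : ℂ) * Complex.exp (θ * Complex.I))‖ := by
  refine (erfc_le_re_cerfc hx ?_).trans (re_le_norm _)
  simp only [add_re, add_im, ofReal_re, ofReal_im, re_ofReal_mul, im_ofReal_mul,
    exp_ofReal_mul_I_re, exp_ofReal_mul_I_im, zero_add, abs_mul, abs_of_nonneg hr]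
  linarith [mul_le_mul_of_nonneg_left (abs_sin_le_neg_cos hθ) hr]
end

section
/- For every real x, one has √π · x · e^{x²} · erfc(x) ≤ 1 (Mill's ratio inequality). -/
open MeasureTheory Real

/-! Since `t > x` on the domain of integration, `x ∫_x^∞ e^{-t²} dt ≤ ∫_x^∞ t e^{-t²} dt`,
and the right-hand side has the elementary primitive `-e^{-t²}/2`, so it equals `e^{-x²}/2`. -/

open Filter Set Topology

theorem mul_setIntegral_Ioi_le_setIntegral_Ioi_mul {μ : Measure ℝ} {f : ℝ → ℝ} {x : ℝ}
    (hf : ∀ t ∈ Ioi x, 0 ≤ f t) (hfi : IntegrableOn f (Ioi x) μ)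
    (hgi : IntegrableOn (fun t => t * f t) (Ioi x) μ) :
    x * ∫ t in Ioi x, f t ∂μ ≤ ∫ t in Ioi x, t * f t ∂μ := by
  rw [← integral_const_mul]
  exact setIntegral_mono_on (hfi.const_mul x) hgi measurableSet_Ioi
    fun t ht => mul_le_mul_of_nonneg_right (le_of_lt ht) (hf t ht)

theorem integral_Ioi_mul_exp_neg_mul_sq {b : ℝ} (hb : 0 < b) (x : ℝ) :
    ∫ t in Ioi x, t * exp (-b * t ^ 2) = exp (-b * x ^ 2) / (2 * b) := by
  have hderiv : ∀ t : ℝ, HasDerivAt (fun t => -(2 * b)⁻¹ * exp (-b * t ^ 2))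
      (t * exp (-b * t ^ 2)) t := fun t => by
    refine (((hasDerivAt_pow 2 t).const_mul (-b)).exp.const_mul (-(2 * b)⁻¹)).congr_deriv ?_
    field_simp
    ring
  have hlim : Tendsto (fun t : ℝ => -(2 * b)⁻¹ * exp (-b * t ^ 2)) atTop (𝓝 0) := by
    simpa using (tendsto_exp_atBot.comp ((tendsto_pow_atTop two_ne_zero).const_mul_atTop_of_neg
      (neg_lt_zero.2 hb))).const_mul (-(2 * b)⁻¹)
  rw [integral_Ioi_of_hasDerivAt_of_tendsto' (fun t _ => hderiv t)
    (integrable_mul_exp_neg_mul_sq hb).integrableOn hlim]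
  ring

theorem mul_integral_Ioi_exp_neg_mul_sq_le {b : ℝ} (hb : 0 < b) (x : ℝ) :
    x * ∫ t in Ioi x, exp (-b * t ^ 2) ≤ exp (-b * x ^ 2) / (2 * b) :=
  (mul_setIntegral_Ioi_le_setIntegral_Ioi_mul (fun _ _ => (exp_pos _).le)
    (integrable_exp_neg_mul_sq hb).integrableOn
    (integrable_mul_exp_neg_mul_sq hb).integrableOn).trans_eq
    (integral_Ioi_mul_exp_neg_mul_sq hb x)

theorem mills_ratio (x : ℝ) :
    Real.sqrt π * x * Real.exp (x ^ 2) * erfc x ≤ 1 := by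
  have hπ : Real.sqrt π ≠ 0 := (Real.sqrt_pos.mpr Real.pi_pos).ne'
  have htail : x * ∫ t in Ioi x, exp (-t ^ 2) ≤ exp (-x ^ 2) / 2 := by
    simpa using mul_integral_Ioi_exp_neg_mul_sq_le one_pos x
  calc Real.sqrt π * x * exp (x ^ 2) * erfc x
      = 2 * exp (x ^ 2) * (x * ∫ t in Ioi x, exp (-t ^ 2)) := by
        unfold erfc; field_simp
    _ ≤ 2 * exp (x ^ 2) * (exp (-x ^ 2) / 2) := by gcongr
    _ = 1 := by rw [mul_div_left_comm, mul_div_cancel_left₀ _ two_ne_zero, ← exp_add]; simp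
end

section
/- The function x ↦ e^{−x²}/erfc(x) is strictly monotonically increasing on ℝ. Equivalently, the complementary error function erfc is strictly log-concave on ℝ. -/
open MeasureTheory Real

open Set Filter

/-!
The derivative of `exp (-x ^ 2) / erfc x` has the sign of `exp (-x ^ 2) - √π * x * erfc x`, which
is twice `∫ t in Ioi x, (t - x) * exp (-t ^ 2)` since `t * exp (-t ^ 2)` integrates to
`exp (-x ^ 2) / 2` over `Ioi x`; the integrand is positive on `Ioi x`.
-/

theorem setIntegral_pos_of_pos {α : Type*} [MeasurableSpace α] {μ : Measure α} {s : Set α}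
    {f : α → ℝ} (hs : MeasurableSet s) (hμs : 0 < μ s) (hf : IntegrableOn f s μ)
    (hpos : ∀ t ∈ s, 0 < f t) : 0 < ∫ t in s, f t ∂μ := by
  have hsupp : s ⊆ Function.support f := fun t ht => (hpos t ht).ne'
  rwa [setIntegral_pos_iff_support_of_nonneg_ae
    ((ae_restrict_iff' hs).2 (.of_forall fun t ht => (hpos t ht).le)) hf, inter_eq_right.2 hsupp]

theorem hasDerivAt_integral_Ioi {E : Type*} [NormedAddCommGroup E] [NormedSpace ℝ E]
    [CompleteSpace E] {f : ℝ → E} (hf : Continuous f) (hfi : Integrable f) (x : ℝ) :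
    HasDerivAt (fun u => ∫ t in Ioi u, f t) (-f x) x := by
  have hFTC : HasDerivAt (fun u => ∫ t in (0 : ℝ)..u, f t) (f x) x :=
    intervalIntegral.integral_hasDerivAt_right (hf.intervalIntegrable _ _)
      (hf.stronglyMeasurableAtFilter _ _) hf.continuousAt
  refine ((hasDerivAt_const x (∫ t in Ioi (0 : ℝ), f t)).sub hFTC).congr_deriv (zero_sub _)
    |>.congr_of_eventuallyEq (.of_forall fun u => ?_)
  simp only [Pi.sub_apply]
  rw [← intervalIntegral.integral_Ioi_sub_Ioi' hfi.integrableOn hfi.integrableOn, sub_sub_cancel]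

theorem integrable_exp_neg_sq : Integrable fun t : ℝ => exp (-t ^ 2) := by
  simpa using integrable_exp_neg_mul_sq one_pos

theorem hasDerivAt_exp_neg_sq (x : ℝ) :
    HasDerivAt (fun t => exp (-t ^ 2)) (-2 * x * exp (-x ^ 2)) x := by
  simpa [mul_comm] using ((hasDerivAt_pow 2 x).neg).exp

theorem integrable_mul_exp_neg_sq : Integrable fun t : ℝ => t * exp (-t ^ 2) := by
  simpa using integrable_mul_exp_neg_mul_sq one_pos

theorem integral_Ioi_mul_exp_neg_sq (x : ℝ) :
    ∫ t in Ioi x, t * exp (-t ^ 2) = exp (-x ^ 2) / 2 := by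
  have hlim : Tendsto (fun t : ℝ => -exp (-t ^ 2) / 2) atTop (nhds 0) := by
    simpa using ((tendsto_exp_atBot.comp
      (tendsto_neg_atTop_atBot.comp (tendsto_pow_atTop two_ne_zero))).neg.div_const 2)
  rw [integral_Ioi_of_hasDerivAt_of_tendsto' (fun t _ => ?_)
    integrable_mul_exp_neg_sq.integrableOn hlim]
  · ring
  · exact ((hasDerivAt_exp_neg_sq t).neg.div_const 2).congr_deriv (by ring)

theorem two_mul_mul_integral_Ioi_exp_neg_sq_lt (x : ℝ) :
    2 * x * ∫ t in Ioi x, exp (-t ^ 2) < exp (-x ^ 2) := by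
  have hxe : Integrable fun t : ℝ => x * exp (-t ^ 2) := integrable_exp_neg_sq.const_mul x
  have hgap : 0 < ∫ t in Ioi x, (t * exp (-t ^ 2) - x * exp (-t ^ 2)) :=
    setIntegral_pos_of_pos measurableSet_Ioi (by simp)
      (integrable_mul_exp_neg_sq.sub hxe).integrableOn fun t ht => by
        rw [← sub_mul]; exact mul_pos (sub_pos.2 ht) (exp_pos _)
  rw [integral_sub integrable_mul_exp_neg_sq.integrableOn hxe.integrableOn, integral_const_mul,
    integral_Ioi_mul_exp_neg_sq] at hgap
  linarith

theorem erfc_pos (x : ℝ) : 0 < erfc x :=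
  mul_pos (by positivity) (setIntegral_pos_of_pos measurableSet_Ioi (by simp)
    integrable_exp_neg_sq.integrableOn fun t _ => exp_pos _)

theorem hasDerivAt_erfc (x : ℝ) : HasDerivAt erfc (-(2 / √π) * exp (-x ^ 2)) x :=
  ((hasDerivAt_integral_Ioi (by fun_prop) integrable_exp_neg_sq x).const_mul (2 / √π))
    |>.congr_deriv (by ring)

theorem sqrt_pi_mul_mul_erfc_lt (x : ℝ) : √π * x * erfc x < exp (-x ^ 2) := by
  have hπ : √π ≠ 0 := (sqrt_pos.2 pi_pos).ne'
  calc √π * x * erfc x = 2 * x * ∫ t in Ioi x, exp (-t ^ 2) := by rw [erfc]; field_simp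
    _ < exp (-x ^ 2) := two_mul_mul_integral_Ioi_exp_neg_sq_lt x

theorem strictMono_exp_neg_sq_div_erfc :
    StrictMono (fun x : ℝ => Real.exp (-x ^ 2) / erfc x) := by
  refine strictMono_of_hasDerivAt_pos
    (fun x => (hasDerivAt_exp_neg_sq x).div (hasDerivAt_erfc x) (erfc_pos x).ne') fun x => ?_
  have hπ : √π ≠ 0 := (sqrt_pos.2 pi_pos).ne'
  have hnum : -2 * x * exp (-x ^ 2) * erfc x - exp (-x ^ 2) * (-(2 / √π) * exp (-x ^ 2)) =
      2 * exp (-x ^ 2) / √π * (exp (-x ^ 2) - √π * x * erfc x) := by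
    field_simp; ring
  rw [hnum]
  exact div_pos (mul_pos (by positivity) (sub_pos.2 (sqrt_pi_mul_mul_erfc_lt x)))
    (pow_pos (erfc_pos x) 2)
end

section
/- Let τ ≥ 0 and set y = √(4 + τ²) − τ. Then y − y³/12 − τ·y²/4 < 8/3. -/
open Real

theorem saddle_value_lt_eight_thirds (τ : ℝ) (hτ : 0 ≤ τ) :
    Real.sqrt (4 + τ ^ 2) - τ - (Real.sqrt (4 + τ ^ 2) - τ) ^ 3 / 12
        - τ * (Real.sqrt (4 + τ ^ 2) - τ) ^ 2 / 4 < 8 / 3 := by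
  set s := Real.sqrt (4 + τ ^ 2) with hs
  have hs2 : s ^ 2 = 4 + τ ^ 2 := Real.sq_sqrt (by positivity)
  have hsnn : 0 ≤ s := Real.sqrt_nonneg _
  have hle : s ≤ 2 + τ := by nlinarith
  have hge : 2 ≤ s := by nlinarith
  nlinarith [sq_nonneg (s - τ), sq_nonneg (s - τ - 2), mul_nonneg hτ (sq_nonneg (s - τ))]
end

section
/- Let τ > 0 and set y = √(4 + τ²) − τ. Then y − y³/12 − τ·y²/4 < 2/τ. -/
open Real

theorem saddle_value_lt_two_div_tau (τ : ℝ) (hτ : 0 < τ) :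
    Real.sqrt (4 + τ ^ 2) - τ - (Real.sqrt (4 + τ ^ 2) - τ) ^ 3 / 12
        - τ * (Real.sqrt (4 + τ ^ 2) - τ) ^ 2 / 4 < 2 / τ := by
  have h4 : (0:ℝ) ≤ 4 + τ ^ 2 := by positivity
  have hs : Real.sqrt (4 + τ ^ 2) ^ 2 = 4 + τ ^ 2 := Real.sq_sqrt h4
  have hs0 : 0 ≤ Real.sqrt (4 + τ ^ 2) := Real.sqrt_nonneg _
  have hy : τ < Real.sqrt (4 + τ ^ 2) := by nlinarith
  have hy0 : 0 < Real.sqrt (4 + τ ^ 2) - τ := sub_pos.mpr hy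
  have hlt : Real.sqrt (4 + τ ^ 2) - τ < 2 / τ := by
    rw [lt_div_iff₀ hτ]; nlinarith
  nlinarith [pow_pos hy0 3, pow_pos hy0 2, mul_pos hτ (pow_pos hy0 2)]
end
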